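/- arXiv:2308.01182 — 2 statements merged into one kernel-verified Lean document; each statement's English description precedes it below -/
import Mathlib

section
/- Let H be a finite group, S ⊆ H with 1 ∉ S and S = S⁻¹, and suppose Cay(H,S) is connected and non-bipartite. Set G = H × ⟨a⟩ with a of order 2. Then Cay(H,S) is unstable if and only if there exists a Schurian Schur ring A over G such that Σ_{h∈H} h ∈ A, Σ_{s∈S} sa ∈ A, and a ∉ A (i.e., the singleton {a} is not an A-set). -/
open scoped Pointwise

noncomputable def clsum {G : Type*} [Group G] [Fintype G] (s : Set G) :
    MonoidAlgebra ℤ G :=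
  ∑ x ∈ s.toFinite.toFinset, MonoidAlgebra.of ℤ G x

structure SchurRing (G : Type*) [Group G] [Fintype G] where
  P : Set (Set G)
  one_mem : ({(1 : G)} : Set G) ∈ P
  nonempty_cls : ∀ X ∈ P, X.Nonempty
  cover : ∀ g : G, ∃ X ∈ P, g ∈ X
  disj : ∀ X ∈ P, ∀ Y ∈ P, X ≠ Y → Disjoint X Y
  inv_mem : ∀ X ∈ P, X⁻¹ ∈ P
  mul_closed : ∀ X ∈ P, ∀ Y ∈ P,
    clsum X * clsum Y ∈ Submodule.span ℤ (clsum '' P)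

def SchurRing.isASet {G : Type*} [Group G] [Fintype G] (A : SchurRing G) (X : Set G) : Prop :=
  clsum X ∈ Submodule.span ℤ (clsum '' A.P)


def cayley (H : Type*) [Group H] (S : Set H) : SimpleGraph H where
  Adj x y := x ≠ y ∧ (y * x⁻¹ ∈ S ∨ x * y⁻¹ ∈ S)
  symm := by
    refine ⟨fun x y h => ?_⟩
    exact ⟨h.1.symm, h.2.symm⟩
  loopless := by
    refine ⟨fun x h => ?_⟩
    exact h.1 rfl

def doubleCover {V : Type*} (Γ : SimpleGraph V) : SimpleGraph (V × ZMod 2) where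
  Adj x y := Γ.Adj x.1 y.1 ∧ x.2 ≠ y.2
  symm := by
    refine ⟨fun x y h => ?_⟩
    exact ⟨h.1.symm, h.2.symm⟩
  loopless := by
    refine ⟨fun x h => ?_⟩
    exact h.2 rfl

def autGroup {V : Type*} (Γ : SimpleGraph V) : Subgroup (Equiv.Perm V) where
  carrier := {σ | ∀ u v, Γ.Adj (σ u) (σ v) ↔ Γ.Adj u v}
  one_mem' := by intro u v; rfl
  mul_mem' := by
    intro a b ha hb u v
    exact (ha (b u) (b v)).trans (hb u v)
  inv_mem' := by
    intro a ha u v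
    conv_rhs => rw [← Equiv.apply_symm_apply a u, ← Equiv.apply_symm_apply a v]
    exact (ha _ _).symm

def Unstable {V : Type*} (Γ : SimpleGraph V) : Prop :=
  ¬ Nonempty (↥(autGroup (doubleCover Γ)) ≃* (↥(autGroup Γ) × Multiplicative (ZMod 2)))

/-- A Schur ring is Schurian if its basic sets are the orbits of the stabilizer of the
identity in some overgroup of the right regular representation. -/
def IsSchurian {G : Type*} [Group G] [Fintype G] (A : SchurRing G) : Prop :=
  ∃ B : Subgroup (Equiv.Perm G), (∀ g : G, Equiv.mulRight g ∈ B) ∧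
    A.P = {X : Set G | ∃ g : G, X = MulAction.orbit (MulAction.stabilizer B (1 : G)) g}

/-!
Write `G = H × ⟨a⟩` and `Δ = Cay(G, S a)`; the map `(h, aⁱ) ↦ (h, i)` identifies `Δ` with the
canonical double cover `Γ × K₂` of `Γ = Cay(H, S)`. Every `(σ, ε) ∈ Aut Γ × ℤ/2` acts on `Γ × K₂`
as `σ × (+ε)`, injectively, so by counting `Γ` is unstable iff some automorphism of `Δ` is not of
this form. As `Γ` is connected and non-bipartite, `Δ` is connected, so every automorphism of `Δ`
shifts the `ℤ/2`-coordinate by a constant; it is then of the expected form iff it commutes with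
multiplication by the central involution `a`. Conjugating by right translations, this holds for
all automorphisms iff every automorphism fixing `1` fixes `a`. Hence `Γ` is unstable iff the
stabiliser of `1` in `Aut Δ` moves `a`.

The `A`-sets of the transitivity module `V(G, B₁)` are exactly the `B₁`-invariant sets. For
`B = Aut Δ` the sets `H` and `S a` are `B₁`-invariant (parity and the neighbourhood of `1`), and
`{a}` is not iff `Γ` is unstable. Conversely, if `S a` is a `B₁`-invariant set then `B ≤ Aut Δ`,
and an element of `B₁` moving `a` witnesses instability.
-/

open MulAction

lemma smul_mem_orbit_iff {K α : Type*} [Group K] [MulAction K α] (k : K) {g h : α} :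
    k • g ∈ orbit K h ↔ g ∈ orbit K h := by
  rw [← orbit_eq_iff, orbit_smul, orbit_eq_iff]

section OrbitSums

variable {G : Type*} [Group G] [Fintype G] (K : Type*) [Group K] [MulAction K G]

lemma coeff_clsum (s : Set G) (g : G) : (clsum s).coeff g = s.indicator 1 g := by
  classical
  simp [clsum, MonoidAlgebra.coeff_sum, Finsupp.single_apply, Set.indicator_apply]

def coeffInvariants : Submodule ℤ (MonoidAlgebra ℤ G) where
  carrier := {f | ∀ (k : K) (g : G), f.coeff (k • g) = f.coeff g}
  add_mem' h₁ h₂ k g := by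
    simp only [MonoidAlgebra.coeff_add, Finsupp.add_apply, h₁ k, h₂ k]
  zero_mem' _ _ := rfl
  smul_mem' c f hf k g := by simp only [MonoidAlgebra.coeff_smul_apply, hf k]

variable {K}

lemma clsum_mem_coeffInvariants_iff (s : Set G) :
    clsum s ∈ coeffInvariants K ↔ ∀ (k : K), ∀ g ∈ s, k • g ∈ s := by
  refine ⟨fun h k g hg => ?_, fun h k g => ?_⟩
  · have := h k g
    rwa [coeff_clsum, coeff_clsum, Set.indicator_of_mem hg, Pi.one_apply,
      Set.indicator_eq_one_iff_mem] at this
  · have hpre : (k • ·) ⁻¹' s = s :=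
      Set.ext fun g => ⟨fun hkg => inv_smul_smul k g ▸ h k⁻¹ _ hkg, h k g⟩
    rw [coeff_clsum, coeff_clsum, ← Set.indicator_comp_right, hpre]
    rfl

lemma clsum_orbit_mem_coeffInvariants (g : G) : clsum (orbit K g) ∈ coeffInvariants K :=
  (clsum_mem_coeffInvariants_iff _).2 fun k _ => (smul_mem_orbit_iff k).2

lemma span_clsum_orbit_eq_coeffInvariants :
    Submodule.span ℤ (clsum '' {X | ∃ g : G, X = orbit K g}) = coeffInvariants K := by
  classical
  refine le_antisymm (Submodule.span_le.2 ?_) fun f hf => ?_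
  · rintro _ ⟨_, ⟨g, rfl⟩, rfl⟩
    exact clsum_orbit_mem_coeffInvariants g
  have hdecomp : f = ∑ ω : orbitRel.Quotient K G, f.coeff ω.out • clsum ω.orbit := by
    refine MonoidAlgebra.coeff_injective (Finsupp.ext fun g => ?_)
    rw [MonoidAlgebra.coeff_sum, Finsupp.finsetSum_apply,
      Finset.sum_eq_single (Quotient.mk'' g : orbitRel.Quotient K G)]
    · obtain ⟨k, hk⟩ : (Quotient.mk'' g : orbitRel.Quotient K G).out ∈ orbit K g :=
        orbitRel.Quotient.mem_orbit.2 (Quotient.out_eq' (Quotient.mk'' g))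
      rw [MonoidAlgebra.coeff_smul_apply, coeff_clsum, orbitRel.Quotient.orbit_mk,
        Set.indicator_of_mem (mem_orbit_self g), ← hk, hf k g]
      simp
    · intro ω _ hω
      rw [MonoidAlgebra.coeff_smul_apply, coeff_clsum,
        Set.indicator_of_notMem (mt orbitRel.Quotient.mem_orbit.1 (Ne.symm hω)), smul_zero]
    · exact fun h => absurd (Finset.mem_univ _) h
  rw [hdecomp]
  refine Submodule.sum_mem _ fun ω _ => Submodule.smul_mem _ _ (Submodule.subset_span ?_)
  exact ⟨ω.orbit, ⟨ω.out, orbitRel.Quotient.orbit_eq_orbit_out _ Quotient.out_eq'⟩, rfl⟩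

lemma SchurRing.isASet_iff_of_P_eq (A : SchurRing G) (hP : A.P = {X | ∃ g : G, X = orbit K g})
    (s : Set G) : A.isASet s ↔ ∀ (k : K), ∀ g ∈ s, k • g ∈ s := by
  rw [SchurRing.isASet, hP, span_clsum_orbit_eq_coeffInvariants, clsum_mem_coeffInvariants_iff]

end OrbitSums

section TransitivityModule

variable {G : Type*} [Group G] {B : Subgroup (Equiv.Perm G)}

local notation "K" => stabilizer B (1 : G)

lemma exists_stabilizer_smul_eq (hB : ∀ g : G, Equiv.mulRight g ∈ B) {b : Equiv.Perm G}
    (hb : b ∈ B) (y : G) : ∃ d : K, ∀ x : G, d • x = b (x * y) * (b y)⁻¹ := by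
  have hd : Equiv.mulRight (b y)⁻¹ * b * Equiv.mulRight y ∈ B :=
    B.mul_mem (B.mul_mem (hB _) hb) (hB _)
  refine ⟨⟨⟨_, hd⟩, ?_⟩, fun x => rfl⟩
  change b (1 * y) * (b y)⁻¹ = 1
  rw [one_mul, mul_inv_cancel]

lemma inv_orbit_stabilizer_subset (hB : ∀ g : G, Equiv.mulRight g ∈ B) (g : G) :
    (orbit K g)⁻¹ ⊆ orbit K g⁻¹ := by
  rintro x ⟨k, hk⟩
  obtain ⟨d, hd⟩ := exists_stabilizer_smul_eq hB (k : B).2 g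
  refine ⟨d, show d • g⁻¹ = x from ?_⟩
  have hk1 : ((k : B) : Equiv.Perm G) 1 = 1 := k.2
  change ((k : B) : Equiv.Perm G) g = x⁻¹ at hk
  rw [hd, inv_mul_cancel, hk1, hk, one_mul, inv_inv]

lemma inv_orbit_stabilizer (hB : ∀ g : G, Equiv.mulRight g ∈ B) (g : G) :
    (orbit K g)⁻¹ = orbit K g⁻¹ := by
  refine (inv_orbit_stabilizer_subset hB g).antisymm fun x hx => ?_
  simpa using inv_orbit_stabilizer_subset hB g⁻¹ (Set.inv_mem_inv.2 hx)

variable [Fintype G]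

lemma mul_mem_coeffInvariants (hB : ∀ g : G, Equiv.mulRight g ∈ B)
    {f₁ f₂ : MonoidAlgebra ℤ G} (h₁ : f₁ ∈ coeffInvariants K) (h₂ : f₂ ∈ coeffInvariants K) :
    f₁ * f₂ ∈ coeffInvariants K := by
  have hcoeff (g : G) : (f₁ * f₂).coeff g = ∑ h : G, f₁.coeff (g * h⁻¹) * f₂.coeff h := by
    rw [MonoidAlgebra.coeff_mul_apply_right, Finsupp.sum_fintype _ _ (by simp)]
  have h₁' (k : K) (g h : G) : f₁.coeff (k • g * (k • h)⁻¹) = f₁.coeff (g * h⁻¹) := by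
    obtain ⟨d, hd⟩ := exists_stabilizer_smul_eq hB (k : B).2 h
    rw [← h₁ d (g * h⁻¹), hd, inv_mul_cancel_right]
    rfl
  intro k g
  calc (f₁ * f₂).coeff (k • g)
      = ∑ h : G, f₁.coeff (k • g * (k • h)⁻¹) * f₂.coeff (k • h) :=
        (hcoeff _).trans (Equiv.sum_comp (MulAction.toPerm k) _).symm
    _ = (f₁ * f₂).coeff g := by simp only [h₁', h₂ k, hcoeff]

variable (B) in
noncomputable def transitivityModule (hB : ∀ g : G, Equiv.mulRight g ∈ B) : SchurRing G where
  P := {X | ∃ g : G, X = orbit K g}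
  one_mem := ⟨1, (Set.eq_singleton_iff_unique_mem.2
    ⟨mem_orbit_self 1, by rintro _ ⟨k, rfl⟩; exact k.2⟩).symm⟩
  nonempty_cls := by
    rintro _ ⟨g, rfl⟩
    exact ⟨g, mem_orbit_self g⟩
  cover g := ⟨orbit K g, ⟨g, rfl⟩, mem_orbit_self g⟩
  disj := by
    rintro _ ⟨g, rfl⟩ _ ⟨h, rfl⟩ hne
    refine Set.disjoint_left.2 fun x hxg hxh => hne ?_
    rw [← orbit_eq_iff.2 hxg, orbit_eq_iff.2 hxh]
  inv_mem := by
    rintro _ ⟨g, rfl⟩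
    exact ⟨g⁻¹, inv_orbit_stabilizer hB g⟩
  mul_closed := by
    rintro _ ⟨g₁, rfl⟩ _ ⟨g₂, rfl⟩
    rw [span_clsum_orbit_eq_coeffInvariants]
    exact mul_mem_coeffInvariants hB (clsum_orbit_mem_coeffInvariants g₁)
      (clsum_orbit_mem_coeffInvariants g₂)

end TransitivityModule

section Cayley

variable {G : Type*} [Group G] {T : Set G}

lemma cayley_adj_iff (h1 : (1 : G) ∉ T) (hT : T⁻¹ = T) {x y : G} :
    (cayley G T).Adj x y ↔ y * x⁻¹ ∈ T := by
  refine ⟨fun ⟨_, h⟩ => h.elim id fun h => ?_, fun h => ⟨?_, Or.inl h⟩⟩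
  · rw [← hT, Set.mem_inv, mul_inv_rev, inv_inv]
    exact h
  · rintro rfl
    exact h1 (mul_inv_cancel x ▸ h)

lemma mulRight_mem_autGroup_cayley (T : Set G) (g : G) :
    Equiv.mulRight g ∈ autGroup (cayley G T) := by
  intro u v
  simp only [cayley, Equiv.coe_mulRight, ne_eq, mul_left_inj, mul_inv_rev, mul_assoc,
    mul_inv_cancel_left]

lemma apply_mem_of_mem_autGroup_cayley (h1 : (1 : G) ∉ T) (hT : T⁻¹ = T) {b : Equiv.Perm G}
    (hb : b ∈ autGroup (cayley G T)) (hb1 : b 1 = 1) {t : G} (ht : t ∈ T) : b t ∈ T := by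
  have hadj := (hb 1 t).2 ((cayley_adj_iff h1 hT).2 (by rwa [inv_one, mul_one]))
  rwa [cayley_adj_iff h1 hT, hb1, inv_one, mul_one] at hadj

variable {B : Subgroup (Equiv.Perm G)}

lemma le_autGroup_cayley (hB : ∀ g : G, Equiv.mulRight g ∈ B)
    (hT : ∀ k : stabilizer B (1 : G), ∀ t ∈ T, k • t ∈ T) : B ≤ autGroup (cayley G T) := by
  have hquot : ∀ b ∈ B, ∀ u v, v * u⁻¹ ∈ T → b v * (b u)⁻¹ ∈ T := fun b hb u v h => by
    obtain ⟨d, hd⟩ := exists_stabilizer_smul_eq hB hb u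
    simpa [hd] using hT d _ h
  have hquot_iff : ∀ b ∈ B, ∀ u v, b v * (b u)⁻¹ ∈ T ↔ v * u⁻¹ ∈ T := fun b hb u v =>
    ⟨fun h => by simpa using hquot _ (B.inv_mem hb) _ _ h, hquot b hb u v⟩
  intro b hb u v
  simp only [cayley, ne_eq, b.injective.eq_iff, hquot_iff b hb]

lemma forall_apply_mul_iff_forall_apply_eq (hB : ∀ g : G, Equiv.mulRight g ∈ B) {z : G}
    (hz : z ∈ Subgroup.center G) :
    (∀ b ∈ B, ∀ v, b (v * z) = b v * z) ↔ ∀ b ∈ B, b 1 = 1 → b z = z := by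
  refine ⟨fun h b hb hb1 => by simpa [hb1] using h b hb 1, fun h b hb v => ?_⟩
  obtain ⟨d, hd⟩ := exists_stabilizer_smul_eq hB hb v
  have hdz : d • z = z := h _ (d : B).2 d.2
  rw [hd, mul_inv_eq_iff_eq_mul] at hdz
  rw [Subgroup.mem_center_iff.1 hz v, hdz, Subgroup.mem_center_iff.1 hz]

end Cayley

lemma SimpleGraph.Iso.permCongr_mem_autGroup_iff {V W : Type*} {Γ : SimpleGraph V}
    {Γ' : SimpleGraph W} (φ : Γ ≃g Γ') {σ : Equiv.Perm V} :
    φ.toEquiv.permCongr σ ∈ autGroup Γ' ↔ σ ∈ autGroup Γ := by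
  refine (φ.toEquiv.forall_congr fun {u} => φ.toEquiv.forall_congr fun {v} => ?_).symm
  simp only [Equiv.permCongr_apply, Equiv.symm_apply_apply]
  exact iff_congr φ.map_adj_iff.symm φ.map_adj_iff.symm

lemma SimpleGraph.Iso.forall_mem_autGroup_iff {V W : Type*} {Γ : SimpleGraph V}
    {Γ' : SimpleGraph W} (φ : Γ ≃g Γ') {P : Equiv.Perm W → Prop} :
    (∀ b ∈ autGroup Γ', P b) ↔ ∀ b ∈ autGroup Γ, P (φ.toEquiv.permCongr b) := by
  rw [← φ.toEquiv.permCongr.forall_congr_right]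
  simp only [φ.permCongr_mem_autGroup_iff]

section DoubleCover

variable {V : Type*} (Γ : SimpleGraph V)

def doubleCoverLift :
    ↥(autGroup Γ) × Multiplicative (ZMod 2) →* ↥(autGroup (doubleCover Γ)) where
  toFun p := ⟨(p.1 : Equiv.Perm V).prodCongr (Equiv.addRight p.2.toAdd), fun u v => by
    simp [doubleCover, p.1.2 u.1 v.1]⟩
  map_one' := by ext <;> simp
  map_mul' p q := by ext <;> simp [add_comm, add_left_comm]

lemma doubleCoverLift_apply (p : ↥(autGroup Γ) × Multiplicative (ZMod 2)) (v : V × ZMod 2) :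
    (doubleCoverLift Γ p : Equiv.Perm (V × ZMod 2)) v =
      ((p.1 : Equiv.Perm V) v.1, v.2 + p.2.toAdd) :=
  rfl

lemma doubleCoverLift_injective [Nonempty V] : Function.Injective (doubleCoverLift Γ) := by
  intro p q h
  have happ (v : V × ZMod 2) := congrArg (fun f : autGroup _ => (f : Equiv.Perm _) v) h
  simp only [doubleCoverLift_apply, Prod.mk.injEq, add_right_inj] at happ
  exact Prod.ext (Subtype.ext (Equiv.ext fun x => (happ (x, 0)).1))
    (Multiplicative.toAdd.injective (happ (Classical.arbitrary V, 0)).2)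

lemma unstable_iff_not_surjective [Finite V] [Nonempty V] :
    Unstable Γ ↔ ¬ Function.Surjective (doubleCoverLift Γ) := by
  refine not_congr ⟨fun ⟨φ⟩ => ?_, fun h => ?_⟩
  · exact ((Nat.bijective_iff_injective_and_card _).2
      ⟨doubleCoverLift_injective Γ, Nat.card_congr φ.toEquiv.symm⟩).2
  · exact ⟨(MulEquiv.ofBijective _ ⟨doubleCoverLift_injective Γ, h⟩).symm⟩

variable {Γ}

lemma SimpleGraph.Walk.length_doubleCover {u v : V × ZMod 2}
    (p : (doubleCover Γ).Walk u v) : (p.length : ZMod 2) = v.2 - u.2 := by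
  induction p with
  | nil => simp
  | @cons u w v h p ih =>
    have hw : w.2 = u.2 + 1 := by
      have : ∀ a b : ZMod 2, a ≠ b → b = a + 1 := by decide
      exact this _ _ h.2
    rw [length_cons, Nat.cast_succ, ih, hw]
    ring

lemma reachable_doubleCover_of_walk {x y : V} (p : Γ.Walk x y) (t : ZMod 2) :
    (doubleCover Γ).Reachable (x, t) (y, t + p.length) := by
  induction p generalizing t with
  | nil => simp
  | @cons x z y h p ih =>
    have hadj : (doubleCover Γ).Adj (x, t) (z, t + 1) := ⟨h, by simp⟩
    convert hadj.reachable.trans (ih (t + 1)) using 2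
    push_cast [SimpleGraph.Walk.length_cons]
    ring

lemma doubleCover_connected (hconn : Γ.Connected) (hnb : ¬ Γ.Colorable 2) :
    (doubleCover Γ).Connected := by
  obtain ⟨x, w, hw⟩ : ∃ x, ∃ w : Γ.Walk x x, Odd w.length := by
    simpa [SimpleGraph.two_colorable_iff_forall_loop_even] using hnb
  have hfiber (t s : ZMod 2) : (doubleCover Γ).Reachable (x, t) (x, s) := by
    have hstep := reachable_doubleCover_of_walk w t
    rw [(ZMod.natCast_eq_one_iff_odd).2 hw] at hstep
    have hcases : ∀ a b : ZMod 2, b = a ∨ b = a + 1 := by decide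
    obtain rfl | rfl := hcases t s
    exacts [SimpleGraph.Reachable.refl _, hstep]
  refine (SimpleGraph.connected_iff_exists_forall_reachable _).2 ⟨(x, 0), fun ⟨y, s⟩ => ?_⟩
  obtain ⟨p⟩ := hconn.preconnected x y
  simpa using (hfiber 0 (s - p.length)).trans (reachable_doubleCover_of_walk p _)

lemma snd_sub_snd_of_mem_autGroup (hc : (doubleCover Γ).Connected)
    {b : Equiv.Perm (V × ZMod 2)} (hb : b ∈ autGroup (doubleCover Γ)) (u v : V × ZMod 2) :
    (b v).2 - (b u).2 = v.2 - u.2 := by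
  obtain ⟨p⟩ := hc.preconnected u v
  let f : doubleCover Γ →g doubleCover Γ := ⟨b, (hb _ _).2⟩
  have hmap := (p.map f).length_doubleCover
  rw [SimpleGraph.Walk.length_map] at hmap
  exact hmap.symm.trans p.length_doubleCover

-- The parity lemma makes `b` shift the `ZMod 2`-coordinate by a constant `ε`; commuting with the
-- swap of the two sheets makes its first coordinate independent of the sheet.
lemma surjective_doubleCoverLift_iff [Nonempty V] (hc : (doubleCover Γ).Connected) :
    Function.Surjective (doubleCoverLift Γ) ↔ ∀ b ∈ autGroup (doubleCover Γ),
      ∀ v : V × ZMod 2, b (v.1, v.2 + 1) = ((b v).1, (b v).2 + 1) := by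
  refine ⟨fun hs b hb v => ?_, fun hswap ⟨b, hb⟩ => ?_⟩
  · obtain ⟨p, hp⟩ := hs ⟨b, hb⟩
    obtain rfl : (doubleCoverLift Γ p : Equiv.Perm (V × ZMod 2)) = b := congrArg Subtype.val hp
    simp only [doubleCoverLift_apply, add_right_comm]
  set ε := (b (Classical.arbitrary V, 0)).2
  set σ : V → V := fun x => (b (x, 0)).1
  have hb_eq (v : V × ZMod 2) : b v = (σ v.1, v.2 + ε) := by
    have hfst : (b v).1 = σ v.1 := by
      obtain ⟨x, t⟩ := v
      obtain rfl | rfl : t = 0 ∨ t = 0 + 1 := by revert t; decide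
      · rfl
      · exact (congrArg Prod.fst (hswap b hb (x, 0)) :)
    have hsnd := snd_sub_snd_of_mem_autGroup hc hb (Classical.arbitrary V, 0) v
    exact Prod.ext hfst (by linear_combination hsnd)
  have hσinj : σ.Injective := fun x y h =>
    congrArg Prod.fst (b.injective ((hb_eq (x, 0)).trans (h ▸ (hb_eq (y, 0)).symm)))
  have hσsurj : σ.Surjective := fun y => ⟨(b.symm (y, 0)).1,
    congrArg Prod.fst ((hb_eq _).symm.trans (b.apply_symm_apply (y, 0)))⟩
  have hσ : Equiv.ofBijective σ ⟨hσinj, hσsurj⟩ ∈ autGroup Γ := fun x y => by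
    have key := hb (x, 0) (y, 1)
    simp only [hb_eq, doubleCover, ne_eq, add_left_inj, zero_ne_one, not_false_eq_true,
      and_true] at key
    exact key
  exact ⟨(⟨_, hσ⟩, Multiplicative.ofAdd ε), Subtype.ext (Equiv.ext fun v => (hb_eq v).symm)⟩

end DoubleCover

section CanonicalDoubleCover

variable {H : Type*} {S : Set H}

-- The paper's connection set `S a`, with `a = (1, ofAdd 1)`.
def coverSet (S : Set H) : Set (H × Multiplicative (ZMod 2)) :=
  (fun s => (s, Multiplicative.ofAdd 1)) '' S

lemma mem_coverSet_iff {p : H × Multiplicative (ZMod 2)} :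
    p ∈ coverSet S ↔ p.1 ∈ S ∧ p.2 = Multiplicative.ofAdd 1 := by
  refine ⟨?_, fun h => ⟨p.1, h.1, Prod.ext rfl h.2.symm⟩⟩
  rintro ⟨s, hs, rfl⟩
  exact ⟨hs, rfl⟩

variable [Group H]

lemma one_notMem_coverSet : (1 : H × Multiplicative (ZMod 2)) ∉ coverSet S :=
  fun h => absurd (mem_coverSet_iff.1 h).2
    (show (1 : Multiplicative (ZMod 2)) ≠ Multiplicative.ofAdd 1 by decide)

lemma inv_coverSet (hS : S⁻¹ = S) : (coverSet S)⁻¹ = coverSet S := by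
  ext p
  rw [Set.mem_inv, mem_coverSet_iff, mem_coverSet_iff, Prod.fst_inv, Prod.snd_inv,
    ← Set.mem_inv, hS, inv_eq_iff_eq_inv]
  rfl

def cayleyCoverSetIso (h1 : (1 : H) ∉ S) (hS : S⁻¹ = S) :
    cayley _ (coverSet S) ≃g doubleCover (cayley H S) where
  toEquiv := (Equiv.refl H).prodCongr Multiplicative.toAdd
  map_rel_iff' {u v} := by
    have hsnd : ∀ s t : Multiplicative (ZMod 2),
        t * s⁻¹ = Multiplicative.ofAdd 1 ↔ s.toAdd ≠ t.toAdd := by decide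
    simp only [doubleCover, Equiv.prodCongr_apply, Equiv.coe_refl, Prod.map_fst, Prod.map_snd,
      id_eq, cayley_adj_iff h1 hS, cayley_adj_iff one_notMem_coverSet (inv_coverSet hS),
      mem_coverSet_iff, Prod.fst_mul, Prod.fst_inv, Prod.snd_mul, Prod.snd_inv, hsnd]

lemma cayleyCoverSetIso_mul (h1 : (1 : H) ∉ S) (hS : S⁻¹ = S)
    (v : H × Multiplicative (ZMod 2)) :
    (cayleyCoverSetIso h1 hS).toEquiv (v * (1, Multiplicative.ofAdd 1)) =
      (((cayleyCoverSetIso h1 hS).toEquiv v).1, ((cayleyCoverSetIso h1 hS).toEquiv v).2 + 1) :=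
  Prod.ext (mul_one v.1) rfl

lemma permCongr_cayleyCoverSetIso_commute_iff (h1 : (1 : H) ∉ S) (hS : S⁻¹ = S)
    (b : Equiv.Perm (H × Multiplicative (ZMod 2))) :
    (∀ w : H × ZMod 2, (cayleyCoverSetIso h1 hS).toEquiv.permCongr b (w.1, w.2 + 1) =
      (((cayleyCoverSetIso h1 hS).toEquiv.permCongr b w).1,
        ((cayleyCoverSetIso h1 hS).toEquiv.permCongr b w).2 + 1)) ↔
    ∀ v, b (v * (1, Multiplicative.ofAdd 1)) = b v * (1, Multiplicative.ofAdd 1) := by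
  rw [← (cayleyCoverSetIso h1 hS).toEquiv.forall_congr_right]
  simp only [Equiv.permCongr_apply, Equiv.symm_apply_apply, ← cayleyCoverSetIso_mul,
    (cayleyCoverSetIso h1 hS).toEquiv.injective.eq_iff]

lemma snd_apply_eq_of_mem_autGroup (h1 : (1 : H) ∉ S) (hS : S⁻¹ = S)
    (hconn : (cayley H S).Connected) (hnb : ¬ (cayley H S).Colorable 2)
    {b : Equiv.Perm (H × Multiplicative (ZMod 2))} (hb : b ∈ autGroup (cayley _ (coverSet S)))
    (hb1 : b 1 = 1) (v : H × Multiplicative (ZMod 2)) : (b v).2 = v.2 := by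
  set φ := cayleyCoverSetIso h1 hS
  have hpar := snd_sub_snd_of_mem_autGroup (doubleCover_connected hconn hnb)
    (φ.permCongr_mem_autGroup_iff.2 hb) (φ.toEquiv 1) (φ.toEquiv v)
  simp only [Equiv.permCongr_apply, Equiv.symm_apply_apply, hb1] at hpar
  exact Multiplicative.toAdd.injective (sub_left_injective hpar)

theorem unstable_cayley_iff_exists_stabilizer_moves [Finite H] (h1 : (1 : H) ∉ S)
    (hS : S⁻¹ = S) (hconn : (cayley H S).Connected) (hnb : ¬ (cayley H S).Colorable 2) :
    Unstable (cayley H S) ↔ ∃ b ∈ autGroup (cayley _ (coverSet S)), b 1 = 1 ∧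
      b (1, Multiplicative.ofAdd 1) ≠ (1, Multiplicative.ofAdd 1) := by
  have hcentral : ((1 : H), Multiplicative.ofAdd (1 : ZMod 2)) ∈ Subgroup.center _ :=
    Subgroup.mem_center_iff.2 fun g => Prod.ext (by simp) (mul_comm _ _)
  rw [unstable_iff_not_surjective, surjective_doubleCoverLift_iff (doubleCover_connected hconn hnb),
    (cayleyCoverSetIso h1 hS).forall_mem_autGroup_iff]
  simp only [permCongr_cayleyCoverSetIso_commute_iff,
    forall_apply_mul_iff_forall_apply_eq (mulRight_mem_autGroup_cayley _) hcentral]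
  push Not
  rfl

end CanonicalDoubleCover

theorem stmt10 {H : Type*} [Group H] [Fintype H] (S : Set H)
    (h1 : (1 : H) ∉ S) (hS : S⁻¹ = S)
    (hconn : (cayley H S).Connected) (hnb : ¬ (cayley H S).Colorable 2) :
    Unstable (cayley H S) ↔
      ∃ A : SchurRing (H × Multiplicative (ZMod 2)),
        IsSchurian A ∧
        A.isASet (Set.range fun h : H => (h, (1 : Multiplicative (ZMod 2)))) ∧
        A.isASet ((fun s => (s, Multiplicative.ofAdd (1 : ZMod 2))) '' S) ∧
        ¬ A.isASet {((1 : H), Multiplicative.ofAdd (1 : ZMod 2))} := by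
  rw [unstable_cayley_iff_exists_stabilizer_moves h1 hS hconn hnb]
  constructor
  · rintro ⟨b, hb, hb1, hba⟩
    have hB := mulRight_mem_autGroup_cayley (coverSet S)
    refine ⟨transitivityModule _ hB, ⟨_, hB, rfl⟩, ?_, ?_, ?_⟩ <;>
      rw [SchurRing.isASet_iff_of_P_eq _ rfl]
    · rintro k _ ⟨h, rfl⟩
      exact ⟨_, Prod.ext rfl (snd_apply_eq_of_mem_autGroup h1 hS hconn hnb k.1.2 k.2 (h, 1)).symm⟩
    · exact fun k t ht => apply_mem_of_mem_autGroup_cayley one_notMem_coverSet (inv_coverSet hS)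
        k.1.2 k.2 ht
    · exact fun hfix => hba (hfix ⟨⟨b, hb⟩, hb1⟩ _ rfl)
  · rintro ⟨A, ⟨B, hB, hP⟩, -, hSa, ha⟩
    rw [A.isASet_iff_of_P_eq hP] at hSa ha
    push Not at ha
    obtain ⟨k, _, rfl, hka⟩ := ha
    exact ⟨_, le_autGroup_cayley hB hSa (k : B).2, k.2, hka⟩
end

section
/- Let G = H × ⟨a⟩ where H is an abelian group of odd order and a has order 2. If A is a Schur ring over G with Σ_{h∈H} h ∈ A and {a} not an A-set, then there exists a nontrivial subgroup L ≤ H such that A is the H/L-wreath product: every basic set of A outside H is a union of L-cosets. -/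
open scoped Pointwise

/-
Let `a = (1, ofAdd 1)` and let `B` be the basic set containing `a`; it lies outside `H`.
For a basic set `X` outside `H`, the set `X a` is an A-set: modulo 2 the class sum of `X` raised
to the power `2 ^ k` is the class sum of `{x ^ 2 ^ k | x ∈ X}`, and for `2 ^ k ≡ 1 [MOD |H|]` the
map `x ↦ x ^ 2 ^ k` is `x ↦ x a` on `H × {a}`. The coefficients of `X⁻¹ · X a` at `a` and at any
`b ∈ B` agree, and at `a` the coefficient is `|X|`, so `X a b⁻¹ ⊆ X`. For `X = B` this makes
`L = {s | (s, a) ∈ B}` a subgroup of `H`; it is nontrivial because `B ≠ {a}`, and every basic set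
outside `H` is a union of `L`-cosets.
-/
open Finset

open scoped Classical

namespace SchurRing

section Group

variable {G : Type*} [Group G] [Fintype G]

lemma clsum_eq_sum_of (s : Set G) : clsum s = ∑ x ∈ s.toFinset, MonoidAlgebra.of ℤ G x := by
  rw [clsum, Set.toFinite_toFinset]

lemma coeff_clsum (s : Set G) (g : G) : (clsum s).coeff g = if g ∈ s then 1 else 0 := by
  simp [clsum_eq_sum_of, MonoidAlgebra.coeff_sum, MonoidAlgebra.of_apply, Finsupp.single_apply]

variable (A : SchurRing G)

lemma one_mem_span : (1 : MonoidAlgebra ℤ G) ∈ Submodule.span ℤ (clsum '' A.P) := by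
  have hone : clsum ({1} : Set G) = 1 := by
    simp [clsum_eq_sum_of, MonoidAlgebra.of_apply, MonoidAlgebra.one_def]
  exact hone ▸ Submodule.subset_span (Set.mem_image_of_mem clsum A.one_mem)

lemma mul_mem_span {ξ η : MonoidAlgebra ℤ G} (hξ : ξ ∈ Submodule.span ℤ (clsum '' A.P))
    (hη : η ∈ Submodule.span ℤ (clsum '' A.P)) : ξ * η ∈ Submodule.span ℤ (clsum '' A.P) := by
  have hle : Submodule.span ℤ (clsum '' A.P) * Submodule.span ℤ (clsum '' A.P) ≤
      Submodule.span ℤ (clsum '' A.P) := by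
    rw [Submodule.span_mul_span, Submodule.span_le]
    rintro _ ⟨_, ⟨X, hX, rfl⟩, _, ⟨Y, hY, rfl⟩, rfl⟩
    exact A.mul_closed X hX Y hY
  exact hle (Submodule.mul_mem_mul hξ hη)

noncomputable def toSubalgebra : Subalgebra ℤ (MonoidAlgebra ℤ G) :=
  (Submodule.span ℤ (clsum '' A.P)).toSubalgebra A.one_mem_span fun _ _ => A.mul_mem_span

lemma isASet_iff {V : Set G} : A.isASet V ↔ clsum V ∈ A.toSubalgebra := Iff.rfl

lemma isASet_of_mem {X : Set G} (hX : X ∈ A.P) : A.isASet X :=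
  Submodule.subset_span ⟨X, hX, rfl⟩

variable {A}

lemma eq_of_mem_of_mem {X Y : Set G} {g : G} (hX : X ∈ A.P) (hY : Y ∈ A.P) (hgX : g ∈ X)
    (hgY : g ∈ Y) : X = Y := by
  by_contra hne
  exact Set.disjoint_left.mp (A.disj X hX Y hY hne) hgX hgY

lemma coeff_eq_of_mem_basic {ξ : MonoidAlgebra ℤ G} (hξ : ξ ∈ A.toSubalgebra) {X : Set G}
    (hX : X ∈ A.P) {x y : G} (hx : x ∈ X) (hy : y ∈ X) : ξ.coeff x = ξ.coeff y := by
  induction hξ using Submodule.span_induction with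
  | mem _ h =>
    obtain ⟨W, hW, rfl⟩ := h
    have hiff : x ∈ W ↔ y ∈ W := ⟨fun hxW => eq_of_mem_of_mem hX hW hx hxW ▸ hy,
      fun hyW => eq_of_mem_of_mem hX hW hy hyW ▸ hx⟩
    simp only [coeff_clsum, hiff]
  | zero => simp
  | add _ _ _ _ h₁ h₂ => simp [h₁, h₂]
  | smul _ _ _ h => simp only [MonoidAlgebra.coeff_smul, Finsupp.smul_apply, h]

lemma isASet_of_forall_subset {V : Set G} (hV : ∀ X ∈ A.P, (X ∩ V).Nonempty → X ⊆ V) :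
    A.isASet V := by
  have hsum : clsum V = ∑ X ∈ {X ∈ A.P.toFinset | X ⊆ V}, clsum X := by
    ext g
    obtain ⟨W, hW, hgW⟩ := A.cover g
    have hunique : ∀ X ∈ A.P, g ∈ X ↔ X = W :=
      fun X hX => ⟨fun hgX => eq_of_mem_of_mem hX hW hgX hgW, fun h => h ▸ hgW⟩
    rw [MonoidAlgebra.coeff_sum, Finsupp.finsetSum_apply]
    simp only [coeff_clsum]
    by_cases hg : g ∈ V
    · rw [if_pos hg, sum_eq_single W]
      · simp [hgW]
      · intro X hX hne
        simp only [mem_filter, Set.mem_toFinset] at hX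
        simp [hunique X hX.1, hne]
      · intro hW'
        simp [hW, hV W hW ⟨g, hgW, hg⟩] at hW'
    · rw [if_neg hg, sum_eq_zero]
      intro X hX
      simp only [mem_filter, Set.mem_toFinset] at hX
      simp only [ite_eq_right_iff, one_ne_zero, imp_false]
      exact fun hgX => hg (hX.2 hgX)
  rw [isASet_iff, hsum]
  exact Subalgebra.sum_mem _ fun X hX =>
    A.isASet_of_mem (Set.mem_toFinset.mp (mem_filter.mp hX).1)

lemma subset_or_subset_compl {V X : Set G} (hV : A.isASet V) (hX : X ∈ A.P) :
    X ⊆ V ∨ X ⊆ Vᶜ := by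
  rw [or_iff_not_imp_left, Set.not_subset]
  rintro ⟨x, hxX, hxV⟩ y hyX hyV
  have := coeff_eq_of_mem_basic hV hX hxX hyX
  simp [coeff_clsum, hxV, hyV] at this

lemma coeff_clsum_inv_mul_clsum (X Y : Set G) (g : G) :
    (clsum X⁻¹ * clsum Y).coeff g = #{y ∈ Y.toFinset | y * g⁻¹ ∈ X} := by
  simp only [clsum_eq_sum_of, sum_mul_sum, MonoidAlgebra.coeff_sum, Finsupp.finsetSum_apply]
  rw [sum_comm, card_filter, Nat.cast_sum]
  refine sum_congr rfl fun y _ => ?_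
  have hxy : ∀ x, x * y = g ↔ x = (y * g⁻¹)⁻¹ := fun x => by
    rw [mul_inv_rev, inv_inv, eq_mul_inv_iff_mul_eq]
  simp [MonoidAlgebra.of_apply, Finsupp.single_apply, hxy]

lemma mul_mul_inv_mem_of_isASet_image_mul {X B : Set G} {t g x : G} (hX : X ∈ A.P)
    (hXt : A.isASet ((· * t) '' X)) (hB : B ∈ A.P) (htB : t ∈ B) (hgB : g ∈ B) (hx : x ∈ X) :
    x * t * g⁻¹ ∈ X := by
  have hξ : clsum X⁻¹ * clsum ((· * t) '' X) ∈ A.toSubalgebra :=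
    mul_mem (A.isASet_of_mem (A.inv_mem X hX)) hXt
  have hcount := coeff_eq_of_mem_basic hξ hB hgB htB
  have hxt : x * t ∈ (· * t) '' X := ⟨x, hx, rfl⟩
  have hY : ∀ y ∈ (· * t) '' X, y * t⁻¹ ∈ X := by
    rintro _ ⟨x, hx, rfl⟩
    simpa using hx
  generalize (· * t) '' X = Y at hcount hxt hY
  rw [coeff_clsum_inv_mul_clsum, coeff_clsum_inv_mul_clsum, Nat.cast_inj,
    filter_true_of_mem fun y hy => hY y (Set.mem_toFinset.mp hy)] at hcount
  exact filter_card_eq hcount _ (Set.mem_toFinset.mpr hxt)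

end Group

section CommGroup

variable {G : Type*} [CommGroup G] [Fintype G] {A : SchurRing G}

lemma mapRingHom_clsum {R : Type*} [Ring R] (s : Set G) :
    MonoidAlgebra.mapRingHom G (Int.castRingHom R) (clsum s) =
      ∑ x ∈ s.toFinset, MonoidAlgebra.of R G x := by
  simp [clsum_eq_sum_of, MonoidAlgebra.of_apply]

lemma isASet_image_pow_prime_pow (p : ℕ) [Fact p.Prime] (n : ℕ) {V : Set G} (hV : A.isASet V)
    (hinj : Set.InjOn (· ^ p ^ n) V) : A.isASet ((· ^ p ^ n) '' V) := by
  have : CharP (MonoidAlgebra (ZMod p) G) p :=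
    charP_of_injective_algebraMap (FaithfulSMul.algebraMap_injective (ZMod p) _) p
  set π := MonoidAlgebra.mapRingHom G (Int.castRingHom (ZMod p))
  have hfrob : π (clsum V ^ p ^ n) = π (clsum ((· ^ p ^ n) '' V)) := by
    rw [map_pow, mapRingHom_clsum, mapRingHom_clsum, sum_pow_char_pow, Set.toFinset_image,
      sum_image (by rwa [Set.coe_toFinset])]
    simp [MonoidAlgebra.of_apply, MonoidAlgebra.single_pow]
  have hcoeff (g : G) :
      ((clsum V ^ p ^ n).coeff g : ZMod p) = if g ∈ (· ^ p ^ n) '' V then 1 else 0 := by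
    rw [← eq_intCast (Int.castRingHom (ZMod p)), ← MonoidAlgebra.coeff_mapRingHom, hfrob,
      MonoidAlgebra.coeff_mapRingHom, coeff_clsum]
    split_ifs <;> simp
  refine isASet_of_forall_subset fun X hX ⟨w, hwX, hwW⟩ y hyX => ?_
  have hwy := coeff_eq_of_mem_basic (pow_mem (A.isASet_iff.mp hV) (p ^ n)) hX hwX hyX
  have := congrArg (Int.cast : ℤ → ZMod p) hwy
  rw [hcoeff, hcoeff, if_pos hwW] at this
  by_contra hy
  rw [if_neg hy] at this
  exact one_ne_zero this

end CommGroup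

end SchurRing

lemma snd_eq_ofAdd_one_of_notMem_range {H : Type*} {x : H × Multiplicative (ZMod 2)}
    (hx : x ∉ Set.range fun h : H => (h, (1 : Multiplicative (ZMod 2)))) :
    x.2 = Multiplicative.ofAdd 1 := by
  have hx2 : x.2 ≠ 1 := fun h => hx ⟨x.1, Prod.ext rfl h.symm⟩
  generalize x.2 = c at hx2
  revert c
  decide

lemma pow_pow_totient_card {G : Type*} [Group G] [Fintype G] {m : ℕ}
    (hm : m.Coprime (Fintype.card G)) (g : G) : g ^ m ^ (Fintype.card G).totient = g := by
  conv_rhs => rw [← pow_one g]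
  exact pow_eq_pow_iff_modEq.mpr ((Nat.ModEq.pow_totient hm).of_dvd orderOf_dvd_card)

lemma SchurRing.isASet_image_mul_ofAdd_one {H : Type*} [CommGroup H] [Fintype H]
    (hodd : Odd (Fintype.card H)) {A : SchurRing (H × Multiplicative (ZMod 2))}
    {X : Set (H × Multiplicative (ZMod 2))} (hX : X ∈ A.P)
    (hXc : X ⊆ (Set.range fun h : H => (h, (1 : Multiplicative (ZMod 2))))ᶜ) :
    A.isASet ((· * ((1 : H), Multiplicative.ofAdd (1 : ZMod 2))) '' X) := by
  set k := (Fintype.card H).totient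
  obtain ⟨j, hj⟩ : ∃ j, k = j + 1 :=
    Nat.exists_eq_add_one_of_ne_zero (Nat.totient_pos.mpr (Fintype.card_pos (α := H))).ne'
  have hpow : Set.EqOn (· ^ 2 ^ k) (· * ((1 : H), Multiplicative.ofAdd (1 : ZMod 2))) X := by
    intro x hx
    refine Prod.ext ?_ ?_
    · simpa using pow_pow_totient_card (Nat.coprime_two_left.mpr hodd) x.1
    · rw [Prod.pow_snd, Prod.snd_mul, snd_eq_ofAdd_one_of_notMem_range (hXc hx), hj, pow_succ',
        pow_mul]
      simp only [show (Multiplicative.ofAdd (1 : ZMod 2)) ^ 2 = 1 by decide, one_pow]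
      decide
  rw [← hpow.image_eq]
  exact isASet_image_pow_prime_pow 2 k (A.isASet_of_mem hX)
    ((mul_left_injective _).injOn.congr hpow.symm)

theorem stmt11 {H : Type*} [CommGroup H] [Fintype H] (hodd : Odd (Fintype.card H))
    (A : SchurRing (H × Multiplicative (ZMod 2)))
    (hH : A.isASet (Set.range fun h : H => (h, (1 : Multiplicative (ZMod 2)))))
    (ha : ¬ A.isASet {((1 : H), Multiplicative.ofAdd (1 : ZMod 2))}) :
    ∃ L : Subgroup H, L ≠ ⊥ ∧
      ∀ X ∈ A.P,
        X ⊆ (Set.range fun h : H => (h, (1 : Multiplicative (ZMod 2))))ᶜ →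
        ∀ x ∈ X, ∀ l ∈ L,
          ((l, (1 : Multiplicative (ZMod 2))) : H × Multiplicative (ZMod 2)) * x ∈ X := by
  set a : H × Multiplicative (ZMod 2) := ((1 : H), Multiplicative.ofAdd (1 : ZMod 2))
  obtain ⟨B, hB, haB⟩ := A.cover a
  have hBc := (SchurRing.subset_or_subset_compl hH hB).resolve_left fun h => by
    obtain ⟨_, hh⟩ := h haB
    have hne : (1 : Multiplicative (ZMod 2)) ≠ Multiplicative.ofAdd 1 := by decide
    exact hne (congrArg Prod.snd hh)
  have key : ∀ X ∈ A.P, X ⊆ (Set.range fun h : H => (h, (1 : Multiplicative (ZMod 2))))ᶜ →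
      ∀ x ∈ X, ∀ b ∈ B, x * a * b⁻¹ ∈ X := fun X hX hXc x hx b hb =>
    SchurRing.mul_mul_inv_mem_of_isASet_image_mul hX
      (SchurRing.isASet_image_mul_ofAdd_one hodd hX hXc) hB haB hb hx
  let L : Subgroup H := Subgroup.ofDiv {s | (s, Multiplicative.ofAdd 1) ∈ B} ⟨1, haB⟩
    fun s hs t ht => by simpa [a] using key B hB hBc _ hs _ ht
  refine ⟨L, fun hL => ha ?_, fun X hX hXc x hx l hl => ?_⟩
  · suffices B = {a} from this ▸ A.isASet_of_mem hB
    refine Set.eq_singleton_iff_unique_mem.mpr ⟨haB, fun b hb => ?_⟩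
    have hb2 := snd_eq_ofAdd_one_of_notMem_range (hBc hb)
    have hb1 : b.1 ∈ L := by
      change (b.1, Multiplicative.ofAdd 1) ∈ B
      rwa [← hb2]
    rw [hL, Subgroup.mem_bot] at hb1
    exact Prod.ext hb1 hb2
  · convert key X hX hXc x hx _ (L.inv_mem hl) using 1
    ext <;> simp [a, mul_comm]
end
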